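/- arXiv:1705.01033 — 9 statements merged into one kernel-verified Lean document; each statement's English description precedes it below -/
import Mathlib

section
/- If D is an integral domain and I is a nonzero fractional ideal of D, then the inverse of the extended ideal ID[[X]] in the power series ring equals I^{-1}[[X]], which also equals the inverse of I[[X]]. -/
/-!
Coefficientwise, a series with coefficients in `I⁻¹` times one with coefficients in `I` has
coefficients in `I⁻¹ I ⊆ D`, so `I⁻¹[[X]] ⊆ (I[[X]])⁻¹ ⊆ (I D[[X]])⁻¹`, the last inclusion
because `I D[[X]] ⊆ I[[X]]`. Conversely, if `x I ⊆ D[[X]]`, multiplying `x` by one nonzero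
constant `a ∈ I` shows that `x = (x a) / a` is a power series over `K`, and multiplying by each
constant `b ∈ I` shows that every coefficient `c` of `x` satisfies `c b ∈ D`, i.e. `c ∈ I⁻¹`.
-/

open scoped nonZeroDivisors

variable (D : Type*) [CommRing D] [IsDomain D]
variable (K : Type*) [Field K] [Algebra D K] [IsFractionRing D K]

/-- `D[[X]]` acts on the field `K((X))` of Laurent series over the quotient field `K`,
via mapping coefficients into `K`.  The quotient field of `D[[X]]` embeds in `K((X))`. -/
noncomputable instance : Algebra (PowerSeries D) (LaurentSeries K) :=
  RingHom.toAlgebra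
    (((HahnSeries.ofPowerSeries ℤ K) : PowerSeries K →+* LaurentSeries K).comp
      (PowerSeries.map (algebraMap D K)))

/-- The ideal `I D[[X]]` of `D[[X]]` generated by a fractional ideal `I ⊆ K`,
viewed inside `K((X))`. -/
noncomputable def extPS (I : FractionalIdeal D⁰ K) : Submodule (PowerSeries D) (LaurentSeries K) :=
  Submodule.span (PowerSeries D)
    ((HahnSeries.C : K →+* LaurentSeries K) '' ((I : Submodule D K) : Set K))

/-- The set of power series with all coefficients in a given `D`-submodule `M ⊆ K`,
viewed inside `K((X))`. -/
def psWithCoeff (M : Submodule D K) : Set (LaurentSeries K) :=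
  {y | ∃ g : PowerSeries K, (∀ n : ℕ, PowerSeries.coeff n g ∈ M) ∧
    y = HahnSeries.ofPowerSeries ℤ K g}

open HahnSeries
open scoped Pointwise

section Coefficients

variable {R : Type*} [CommRing R] {L : Type*} [Field L] [Algebra R L]

theorem algebraMap_powerSeries_laurentSeries (f : PowerSeries R) :
    algebraMap (PowerSeries R) (LaurentSeries L) f =
      ofPowerSeries ℤ L (PowerSeries.map (algebraMap R L) f) :=
  rfl

theorem ofPowerSeries_mem_psWithCoeff_iff {M : Submodule R L} {g : PowerSeries L} :
    ofPowerSeries ℤ L g ∈ psWithCoeff R L M ↔ ∀ n, PowerSeries.coeff n g ∈ M :=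
  ⟨fun ⟨_, hg', h⟩ ↦ ofPowerSeries_injective h ▸ hg', fun hg ↦ ⟨g, hg, rfl⟩⟩

theorem psWithCoeff_mono {M N : Submodule R L} (h : M ≤ N) :
    psWithCoeff R L M ⊆ psWithCoeff R L N :=
  fun _ ⟨g, hg, hx⟩ ↦ ⟨g, fun n ↦ h (hg n), hx⟩

theorem C_mem_psWithCoeff {M : Submodule R L} {a : L} (ha : a ∈ M) :
    C a ∈ psWithCoeff R L M := by
  rw [← ofPowerSeries_C, ofPowerSeries_mem_psWithCoeff_iff]
  intro n
  rw [PowerSeries.coeff_C]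
  split_ifs
  exacts [ha, M.zero_mem]

theorem mem_one_iff_mem_psWithCoeff_one {x : LaurentSeries L} :
    x ∈ (1 : Submodule (PowerSeries R) (LaurentSeries L)) ↔ x ∈ psWithCoeff R L 1 := by
  rw [Submodule.mem_one]
  constructor
  · rintro ⟨f, rfl⟩
    refine ofPowerSeries_mem_psWithCoeff_iff.mpr fun n ↦ Submodule.mem_one.mpr ?_
    exact ⟨PowerSeries.coeff n f, (PowerSeries.coeff_map _ _ _).symm⟩
  · rintro ⟨g, hg, rfl⟩
    choose f hf using fun n ↦ Submodule.mem_one.mp (hg n)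
    refine ⟨PowerSeries.mk f, ?_⟩
    rw [algebraMap_powerSeries_laurentSeries]
    congr 1
    ext n
    simp [hf n]

theorem psWithCoeff_mul_subset (M N : Submodule R L) :
    psWithCoeff R L M * psWithCoeff R L N ⊆ psWithCoeff R L (M * N) := by
  rintro _ ⟨_, ⟨g, hg, rfl⟩, _, ⟨h, hh, rfl⟩, rfl⟩
  beta_reduce
  rw [← map_mul, ofPowerSeries_mem_psWithCoeff_iff]
  intro n
  rw [PowerSeries.coeff_mul]
  exact Submodule.sum_mem _ fun p _ ↦ Submodule.mul_mem_mul (hg p.1) (hh p.2)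

theorem psWithCoeff_subset_one_div_span {M N : Submodule R L} (h : M * N ≤ 1) :
    psWithCoeff R L M ⊆ (1 / Submodule.span (PowerSeries R) (psWithCoeff R L N) :
      Submodule (PowerSeries R) (LaurentSeries L)) := by
  rw [← Submodule.span_le, Submodule.le_div_iff_mul_le, Submodule.span_mul_span,
    Submodule.span_le]
  exact (psWithCoeff_mul_subset M N).trans
    fun x hx ↦ mem_one_iff_mem_psWithCoeff_one.mpr (psWithCoeff_mono h hx)

theorem extPS_le_span_psWithCoeff (I : FractionalIdeal R⁰ L) :
    extPS R L I ≤ Submodule.span (PowerSeries R) (psWithCoeff R L I) :=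
  Submodule.span_le.mpr fun _ ⟨_, ha, hx⟩ ↦ hx ▸ Submodule.subset_span (C_mem_psWithCoeff ha)

end Coefficients

theorem Submodule.one_div_anti {R A : Type*} [CommSemiring R] [CommSemiring A] [Algebra R A]
    {J J' : Submodule R A} (h : J' ≤ J) : 1 / J ≤ 1 / J' := by
  rw [Submodule.le_div_iff_mul_le]
  calc 1 / J * J' ≤ 1 / J * J := mul_le_mul_right h _
    _ ≤ 1 := by rw [mul_comm]; exact Submodule.mul_one_div_le_one

theorem FractionalIdeal.coe_inv_mul_le_one {R L : Type*} [CommRing R] [IsDomain R] [Field L]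
    [Algebra R L] [IsFractionRing R L] (I : FractionalIdeal R⁰ L) :
    ((I⁻¹ : FractionalIdeal R⁰ L) : Submodule R L) * I ≤ 1 := by
  rw [← coe_mul, ← coe_one, coe_le_coe, mul_comm, inv_eq]
  exact mul_one_div_le_one

theorem LaurentSeries.eq_ofPowerSeries_of_mul_C_eq {L : Type*} [Field L] {x : LaurentSeries L}
    {a : L} (ha : a ≠ 0) {g : PowerSeries L} (h : x * C a = ofPowerSeries ℤ L g) :
    x = ofPowerSeries ℤ L (PowerSeries.C a⁻¹ * g) := by
  rw [map_mul, ofPowerSeries_C, ← h, mul_left_comm, ← map_mul, inv_mul_cancel₀ ha, map_one, mul_one]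

theorem one_div_extPS_subset_psWithCoeff_inv {R L : Type*} [CommRing R] [IsDomain R] [Field L]
    [Algebra R L] [IsFractionRing R L] {I : FractionalIdeal R⁰ L} (hI : I ≠ 0) :
    ((1 / extPS R L I : Submodule (PowerSeries R) (LaurentSeries L)) : Set (LaurentSeries L)) ⊆
      psWithCoeff R L (I⁻¹ : FractionalIdeal R⁰ L) := by
  intro x hx
  have hxC (a : L) (ha : a ∈ I) : x * C a ∈ psWithCoeff R L 1 :=
    mem_one_iff_mem_psWithCoeff_one.mp (hx _ (Submodule.subset_span ⟨a, ha, rfl⟩))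
  obtain ⟨a, ha, ha0⟩ :=
    Submodule.exists_mem_ne_zero_of_ne_bot (FractionalIdeal.coeToSubmodule_ne_bot.mpr hI)
  obtain ⟨g, -, hg⟩ := hxC a ha
  obtain rfl := LaurentSeries.eq_ofPowerSeries_of_mul_C_eq ha0 hg
  rw [ofPowerSeries_mem_psWithCoeff_iff]
  intro n
  rw [FractionalIdeal.mem_coe, FractionalIdeal.mem_inv_iff hI]
  intro b hb
  have hb' := hxC b hb
  rw [← ofPowerSeries_C, ← map_mul, ofPowerSeries_mem_psWithCoeff_iff] at hb'
  simpa only [PowerSeries.coeff_mul_C, ← FractionalIdeal.mem_coe, FractionalIdeal.coe_one]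
    using hb' n

/-- for a nonzero fractional ideal `I` of `D`,
`(I D[[X]])⁻¹ = I⁻¹[[X]] = (I[[X]])⁻¹`, where `J⁻¹ = (D[[X]] : J)`. -/
theorem stmt_0 (I : FractionalIdeal D⁰ K) (hI : I ≠ 0) :
    (((1 : Submodule (PowerSeries D) (LaurentSeries K)) / extPS D K I :
        Submodule (PowerSeries D) (LaurentSeries K)) : Set (LaurentSeries K)) =
      psWithCoeff D K ((I⁻¹ : FractionalIdeal D⁰ K) : Submodule D K) ∧
    psWithCoeff D K ((I⁻¹ : FractionalIdeal D⁰ K) : Submodule D K) =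
      (((1 : Submodule (PowerSeries D) (LaurentSeries K)) /
          Submodule.span (PowerSeries D) (psWithCoeff D K (I : Submodule D K)) :
        Submodule (PowerSeries D) (LaurentSeries K)) : Set (LaurentSeries K)) := by
  have hdiv := one_div_extPS_subset_psWithCoeff_inv hI
  have hinv := psWithCoeff_subset_one_div_span I.coe_inv_mul_le_one
  have hspan := SetLike.coe_mono <| Submodule.one_div_anti (extPS_le_span_psWithCoeff I)
  exact ⟨hdiv.antisymm (hinv.trans hspan), hinv.antisymm (hspan.trans hdiv)⟩
end

section
/- If D is an integral domain such that D[[X]] is a v-domain, then D is a v-domain. -/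
open scoped nonZeroDivisors

/-- `R` is a `v`-domain: every nonzero finitely generated fractional ideal `I`
satisfies `(I * I⁻¹)_v = R`, where `J_v = (J⁻¹)⁻¹`. -/
def IsVDomain (R : Type*) [CommRing R] [IsDomain R] : Prop :=
  ∀ I : FractionalIdeal R⁰ (FractionRing R), I ≠ 0 → (I : Submodule R (FractionRing R)).FG →
    ((I * I⁻¹)⁻¹)⁻¹ = 1

/-!
Let `I = (x₁, …, xₙ) ≠ 0` over `D` and `A = I·D⟦X⟧`. For `v ∈ A⁻¹` write `v xᵢ = Gᵢ ∈ D⟦X⟧`.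
Comparing coefficients in `Gᵢ xⱼ = Gⱼ xᵢ` shows that the `m`-th coefficients of the `Gᵢ` are
`fₘ xᵢ` for a single `fₘ ∈ I⁻¹`. Hence every `y ∈ (I I⁻¹)⁻¹` satisfies `y A⁻¹ ⊆ A⁻¹`, hence
`y ∈ (A A⁻¹)⁻¹`, which is `D⟦X⟧` because `D⟦X⟧` is a `v`-domain. An element of `K` lying in
`D⟦X⟧` lies in `D`, so `(I I⁻¹)⁻¹ = D`.
-/

open scoped PowerSeries

namespace FractionalIdeal

variable {R K : Type*} [CommRing R] [IsDomain R] [Field K] [Algebra R K] [IsFractionRing R K]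
  {J : FractionalIdeal R⁰ K}

theorem mul_inv_ne_zero (hJ : J ≠ 0) : J * J⁻¹ ≠ 0 := by
  simpa [bot_eq_zero] using (bot_lt_mul_inv hJ).ne'

theorem le_inv_inv (J : FractionalIdeal R⁰ K) : J ≤ J⁻¹⁻¹ := by
  rcases eq_or_ne J 0 with rfl | hJ
  · exact zero_le _
  · rw [inv_eq (I := J⁻¹), le_div_iff_mul_le (right_ne_zero_of_mul (mul_inv_ne_zero hJ))]
    exact mul_one_div_le_one

theorem inv_inv_eq_one_iff (hJ : J ≠ 0) (hJ1 : J ≤ 1) : J⁻¹⁻¹ = 1 ↔ J⁻¹ ≤ 1 := by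
  refine ⟨fun h ↦ by simpa [h] using le_inv_inv J⁻¹, fun h ↦ ?_⟩
  have h1 : 1 ≤ J⁻¹ := by rwa [inv_eq, le_div_iff_mul_le hJ, one_mul]
  rw [le_antisymm h h1, inv_one]

theorem mem_inv_iff_of_coe_eq_span {S : Set K} (hS : (J : Submodule R K) = Submodule.span R S)
    (hJ : J ≠ 0) {z : K} : z ∈ J⁻¹ ↔ ∀ x ∈ S, z * x ∈ (1 : FractionalIdeal R⁰ K) := by
  rw [mem_inv_iff hJ]
  change (J : Submodule R K) ≤
    (1 : FractionalIdeal R⁰ K).coeToSubmodule.comap (LinearMap.mulLeft R z) ↔ _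
  rw [hS, Submodule.span_le]
  rfl

theorem mem_inv_mul_inv_of_mul_mem_inv (hJ : J ≠ 0) {z : K} (h : ∀ v ∈ J⁻¹, z * v ∈ J⁻¹) :
    z ∈ (J * J⁻¹)⁻¹ := by
  rw [mem_inv_iff (mul_inv_ne_zero hJ)]
  intro w hw
  refine FractionalIdeal.mul_induction_on hw (fun a ha v hv ↦ ?_) (fun a b ha hb ↦ ?_)
  · rw [mul_left_comm, mul_comm]
    exact (mem_inv_iff hJ).1 (h v hv) a ha
  · rw [mul_add]
    exact Submodule.add_mem (1 : FractionalIdeal R⁰ K).coeToSubmodule ha hb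

end FractionalIdeal

theorem isVDomain_iff {R : Type*} [CommRing R] [IsDomain R] : IsVDomain R ↔
    ∀ I : FractionalIdeal R⁰ (FractionRing R), I ≠ 0 → (I : Submodule R (FractionRing R)).FG →
      (I * I⁻¹)⁻¹ ≤ 1 := by
  refine forall₂_congr fun I hI ↦ imp_congr_right fun _ ↦ ?_
  exact FractionalIdeal.inv_inv_eq_one_iff (FractionalIdeal.mul_inv_ne_zero hI)
    FractionalIdeal.mul_one_div_le_one

namespace PowerSeries

variable {D K L : Type*} [CommRing D] [IsDomain D] [Field K] [Algebra D K] [IsFractionRing D K]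
  [Field L] [Algebra D⟦X⟧ L] [IsFractionRing D⟦X⟧ L]

-- The embedding `K → L` of fraction fields induced by `C`; lemma names call it `fractionMap`.
local notation "ι" => (IsFractionRing.map (C_injective (R := D)) : K →+* L)

theorem fractionMap_algebraMap (d : D) : ι (algebraMap D K d) = algebraMap D⟦X⟧ L (C d) :=
  IsLocalization.map_eq _ _

theorem algebraMap_eq_fractionMap_mul_iff (y : K) (G H : D⟦X⟧) :
    algebraMap D⟦X⟧ L H = ι y * algebraMap D⟦X⟧ L G ↔
      ∀ m, algebraMap D K (coeff m H) = y * algebraMap D K (coeff m G) := by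
  obtain ⟨c, e, he, rfl⟩ := IsFractionRing.div_surjective (A := D) y
  have he0 : algebraMap D K e ≠ 0 := IsFractionRing.to_map_ne_zero_of_mem_nonZeroDivisors he
  have hCe0 : algebraMap D⟦X⟧ L (C e) ≠ 0 := by
    rw [← fractionMap_algebraMap (K := K)]; exact (map_ne_zero _).2 he0
  rw [map_div₀, fractionMap_algebraMap, fractionMap_algebraMap, div_mul_eq_mul_div,
    eq_div_iff hCe0, mul_comm, ← map_mul, ← map_mul, (IsFractionRing.injective D⟦X⟧ L).eq_iff,
    PowerSeries.ext_iff]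
  refine forall_congr' fun m ↦ ?_
  rw [coeff_C_mul, coeff_C_mul, ← (IsFractionRing.injective D K).eq_iff, map_mul, map_mul,
    div_mul_eq_mul_div, eq_div_iff he0, mul_comm]

theorem fractionMap_mul_mem_one_iff (y : K) (G : D⟦X⟧) :
    ι y * algebraMap D⟦X⟧ L G ∈ (1 : FractionalIdeal D⟦X⟧⁰ L) ↔
      ∀ m, y * algebraMap D K (coeff m G) ∈ (1 : FractionalIdeal D⁰ K) := by
  simp only [FractionalIdeal.mem_one_iff]
  constructor
  · rintro ⟨H, hH⟩ m
    exact ⟨coeff m H, (algebraMap_eq_fractionMap_mul_iff y G H).1 hH m⟩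
  · intro h
    choose d hd using h
    exact ⟨mk d, (algebraMap_eq_fractionMap_mul_iff y G _).2 fun m ↦ by rw [coeff_mk, hd]⟩

theorem fractionMap_mul_mem_one_of_mem_inv_mul_inv {I : FractionalIdeal D⁰ K} (hI : I ≠ 0)
    {s : Set K} (hs : Submodule.span D s = I) {y : K} (hy : y ∈ (I * I⁻¹)⁻¹) {v : L}
    (hv : ∀ x ∈ s, v * ι x ∈ (1 : FractionalIdeal D⟦X⟧⁰ L)) :
    ∀ x ∈ s, ι y * v * ι x ∈ (1 : FractionalIdeal D⟦X⟧⁰ L) := by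
  obtain ⟨x₀, hx₀s, hx₀⟩ : ∃ x ∈ s, x ≠ 0 := by
    by_contra! h0
    exact hI (FractionalIdeal.coeToSubmodule_eq_bot.1 (hs ▸ Submodule.span_eq_bot.2 h0))
  obtain ⟨G, hG⟩ := (FractionalIdeal.mem_one_iff _).1 (hv x₀ hx₀s)
  have hv₀ : v = ι x₀⁻¹ * algebraMap D⟦X⟧ L G := by
    rw [hG, map_inv₀, mul_comm v, ← mul_assoc, inv_mul_cancel₀ ((map_ne_zero _).2 hx₀), one_mul]
  -- `coeff m (v x) = fₘ x` for all `x ∈ s`, with the same `fₘ := x₀⁻¹ coeff m G`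
  have hf : ∀ m, x₀⁻¹ * algebraMap D K (coeff m G) ∈ I⁻¹ := by
    intro m
    rw [FractionalIdeal.mem_inv_iff_of_coe_eq_span hs.symm hI]
    intro x hx
    have hvx : ι (x * x₀⁻¹) * algebraMap D⟦X⟧ L G = v * ι x := by
      rw [hv₀]; simp only [map_mul]; ring
    have := (fractionMap_mul_mem_one_iff (x * x₀⁻¹) G).1 (hvx ▸ hv x hx) m
    convert this using 1
    ring
  intro x hx
  have hyvx : ι y * v * ι x = ι (y * x * x₀⁻¹) * algebraMap D⟦X⟧ L G := by
    rw [hv₀]; simp only [map_mul]; ring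
  rw [hyvx, fractionMap_mul_mem_one_iff]
  intro m
  have := (FractionalIdeal.mem_inv_iff (FractionalIdeal.mul_inv_ne_zero hI)).1 hy _
    (FractionalIdeal.mul_mem_mul (I := I) (hs ▸ Submodule.subset_span hx) (hf m))
  convert this using 1
  ring

end PowerSeries

/-- If `D[[X]]` is a `v`-domain, then `D` is a `v`-domain. -/
theorem stmt_1 (D : Type*) [CommRing D] [IsDomain D]
    (h : IsVDomain (PowerSeries D)) : IsVDomain D := by
  rw [isVDomain_iff] at h ⊢
  rintro I hI ⟨s, hs⟩ y hy
  let ι : FractionRing D →+* FractionRing D⟦X⟧ :=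
    IsFractionRing.map (PowerSeries.C_injective (R := D))
  let A := FractionalIdeal.spanFinset D⟦X⟧ s ι
  have hA_span : (A : Submodule D⟦X⟧ _) = Submodule.span D⟦X⟧ (ι '' s) :=
    FractionalIdeal.spanFinset_coe _ _ _
  have hA : A ≠ 0 := fun hA0 ↦ hI <| by
    rw [← FractionalIdeal.coeToSubmodule_eq_bot, ← hs, Submodule.span_eq_bot]
    exact fun x hx ↦ (map_eq_zero ι).1 (FractionalIdeal.spanFinset_eq_zero.1 hA0 x hx)
  have hyA : ι y ∈ (A * A⁻¹)⁻¹ := by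
    refine FractionalIdeal.mem_inv_mul_inv_of_mul_mem_inv hA fun v hv ↦ ?_
    rw [FractionalIdeal.mem_inv_iff_of_coe_eq_span hA_span hA, Set.forall_mem_image] at hv ⊢
    simpa only [mul_assoc] using
      PowerSeries.fractionMap_mul_mem_one_of_mem_inv_mul_inv hI hs hy hv
  have hyA_one := h A hA (hA_span ▸ Submodule.fg_span (s.finite_toSet.image _)) hyA
  have := (PowerSeries.fractionMap_mul_mem_one_iff (L := FractionRing D⟦X⟧) y (1 : D⟦X⟧)).1
    (by rwa [map_one, mul_one]) 0
  simpa using this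
end

section
/- An integral domain D is strongly Archimedean if and only if D is completely integrally closed. -/
open scoped nonZeroDivisors

/-- `D` is completely integrally closed (w.r.t. a quotient field `K`). -/
def IsCompletelyIntegrallyClosed (D : Type*) [CommRing D] [IsDomain D]
    (K : Type*) [Field K] [Algebra D K] [IsFractionRing D K] : Prop :=
  ∀ x : K,
    (∃ r : D, r ≠ 0 ∧ ∀ n : ℕ, 1 ≤ n →
      ∃ d : D, algebraMap D K d = algebraMap D K r * x ^ n) →
    ∃ d : D, algebraMap D K d = x

/-- `D` is strongly Archimedean: for all `a b ∈ D` with `(b) ⊄ (a)`,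
`⋂_{n ≥ 1} (a/b)^n D = (0)` as fractional `D`-submodules of `K`. -/
def IsStronglyArchimedean (D : Type*) [CommRing D] [IsDomain D]
    (K : Type*) [Field K] [Algebra D K] [IsFractionRing D K] : Prop :=
  ∀ a b : D, ¬ (Ideal.span {b} ≤ Ideal.span {a}) →
    (⨅ (n : ℕ) (_ : 1 ≤ n),
      Submodule.span D {(algebraMap D K a / algebraMap D K b) ^ n}) = ⊥

/-!
Writing `x = a / b`, the hypothesis `(b) ⊄ (a)` says exactly that `x⁻¹ = b / a` does not lie
in `D`, while a nonzero element of `⋂ₙ xⁿ D`, after clearing its denominator, is a nonzero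
`r ∈ D` with `r x⁻ⁿ ∈ D` for all `n`, i.e. a witness that `x⁻¹` is almost integral over `D`. So both
properties say that no almost integral element of `K` lies outside `D`.
-/

lemma iInf_span_zero_pow (R M : Type*) [Semiring R] [Semiring M] [Module R M] :
    (⨅ (n : ℕ) (_ : 1 ≤ n), Submodule.span R {(0 : M) ^ n}) = ⊥ :=
  le_bot_iff.mp <| (iInf₂_le 1 le_rfl).trans (by simp)

section FractionField

variable {D K : Type*} [CommRing D] [Field K] [Algebra D K] [IsFractionRing D K]

lemma isCompletelyIntegrallyClosed_iff [IsDomain D] :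
    IsCompletelyIntegrallyClosed D K ↔
      ∀ x : K, IsAlmostIntegral D x → x ∈ (algebraMap D K).range := by
  refine forall_congr' fun x ↦ imp_congr ?_ Iff.rfl
  simp only [IsAlmostIntegral, mem_nonZeroDivisors_iff_ne_zero, RingHom.mem_range,
    Algebra.smul_def]
  refine exists_congr fun r ↦ and_congr_right fun _ ↦ ⟨fun h n ↦ ?_, fun h n _ ↦ h n⟩
  rcases n.eq_zero_or_pos with rfl | hn
  · exact ⟨r, by simp⟩
  · exact h n hn

lemma span_singleton_le_span_singleton_iff_div_mem_range {a b : D} (ha : a ≠ 0) :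
    Ideal.span {b} ≤ Ideal.span {a} ↔
      algebraMap D K b / algebraMap D K a ∈ (algebraMap D K).range := by
  have ha' : algebraMap D K a ≠ 0 := (map_ne_zero_iff _ (IsFractionRing.injective D K)).mpr ha
  rw [Ideal.span_singleton_le_span_singleton]
  constructor
  · rintro ⟨c, rfl⟩
    exact ⟨c, by rw [map_mul, mul_div_cancel_left₀ _ ha']⟩
  · rintro ⟨c, hc⟩
    exact ⟨c, IsFractionRing.injective D K (by rw [map_mul, hc, mul_div_cancel₀ _ ha'])⟩

lemma iInf_span_pow_eq_bot_iff [IsDomain D] {x : K} (hx : x ≠ 0) :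
    (⨅ (n : ℕ) (_ : 1 ≤ n), Submodule.span D {x ^ n}) = ⊥ ↔ ¬ IsAlmostIntegral D x⁻¹ := by
  rw [← not_iff_not, not_not, ← ne_eq, Submodule.ne_bot_iff]
  simp only [Submodule.mem_iInf, Submodule.mem_span_singleton]
  constructor
  · rintro ⟨y, hy, hy0⟩
    obtain ⟨p, q, hq, rfl⟩ := IsFractionRing.div_surjective (A := D) y
    have hq' : algebraMap D K q ≠ 0 := IsFractionRing.to_map_ne_zero_of_mem_nonZeroDivisors hq
    have hp : p ≠ 0 := by rintro rfl; simp at hy0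
    refine ⟨p, mem_nonZeroDivisors_of_ne_zero hp, fun n ↦ ?_⟩
    rcases n.eq_zero_or_pos with rfl | hn
    · exact ⟨p, by simp [Algebra.smul_def]⟩
    obtain ⟨d, hd⟩ := hy n hn
    rw [Algebra.smul_def, eq_div_iff hq'] at hd
    refine ⟨q * d, ?_⟩
    rw [Algebra.smul_def, map_mul, ← hd, inv_pow, mul_right_comm _ _ (algebraMap D K q),
      mul_inv_cancel_right₀ (pow_ne_zero n hx), mul_comm]
  · rintro ⟨r, hr, hrx⟩
    refine ⟨algebraMap D K r, fun n _ ↦ ?_,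
      IsFractionRing.to_map_ne_zero_of_mem_nonZeroDivisors hr⟩
    obtain ⟨d, hd⟩ := hrx n
    refine ⟨d, ?_⟩
    rw [Algebra.smul_def] at hd ⊢
    rw [hd, mul_assoc, inv_pow, inv_mul_cancel₀ (pow_ne_zero _ hx), mul_one]

end FractionField

/-- An integral domain is strongly Archimedean iff it is completely integrally closed. -/
theorem stmt_3 (D : Type*) [CommRing D] [IsDomain D]
    (K : Type*) [Field K] [Algebra D K] [IsFractionRing D K] :
    IsStronglyArchimedean D K ↔ IsCompletelyIntegrallyClosed D K := by
  rw [isCompletelyIntegrallyClosed_iff]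
  constructor
  · intro hSA x hx
    obtain ⟨b, a, ha, rfl⟩ := IsFractionRing.div_surjective (A := D) x
    by_contra hbx
    have ha0 : a ≠ 0 := nonZeroDivisors.ne_zero ha
    have hb0 : b ≠ 0 := by rintro rfl; simp at hbx
    have hab := (span_singleton_le_span_singleton_iff_div_mem_range ha0).not.mpr hbx
    have hne : algebraMap D K a / algebraMap D K b ≠ 0 := by simp [ha0, hb0]
    exact (iInf_span_pow_eq_bot_iff hne).mp (hSA a b hab) (by rwa [inv_div])
  · intro hCIC a b hab
    rcases eq_or_ne a 0 with rfl | ha0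
    · simpa using iInf_span_zero_pow D K
    have hb0 : b ≠ 0 := by rintro rfl; exact hab (by simp)
    have hne : algebraMap D K a / algebraMap D K b ≠ 0 := by simp [ha0, hb0]
    refine (iInf_span_pow_eq_bot_iff hne).mpr fun h ↦ hab ?_
    rw [inv_div] at h
    exact (span_singleton_le_span_singleton_iff_div_mem_range ha0).mpr (hCIC _ h)
end

section
/- If D is a completely integrally closed domain, then for every ideal I of D with I_v a proper ideal of D, the intersection over all n ≥ 1 of (I^n)_v is the zero ideal. -/
open scoped nonZeroDivisors

/-!
If `0 ≠ x ∈ (I ^ n)_v` for every `n ≥ 1` and `u ∈ I⁻¹`, then `u ^ n ∈ (I ^ n)⁻¹`, so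
`x * u ^ n ∈ D` for all `n ≥ 1`. Clearing the denominator of `x` shows that `u` is almost
integral, hence `u ∈ D` by complete integral closedness. Thus `I⁻¹ = D` and `I_v = D`.
-/

namespace FractionalIdeal

variable {R K : Type*} [CommRing R] [IsDomain R] [Field K] [Algebra R K] [IsFractionRing R K]

theorem inv_pow_le {J : FractionalIdeal R⁰ K} {n : ℕ} (hJn : J ^ n ≠ 0) :
    J⁻¹ ^ n ≤ (J ^ n)⁻¹ := by
  rw [inv_eq (I := J ^ n), le_div_iff_mul_le hJn, ← mul_pow]
  exact pow_le_one' (mul_comm J _ ▸ mul_one_div_le_one) n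

theorem one_le_inv_of_le_one {J : FractionalIdeal R⁰ K} (hJ : J ≠ 0) (hJ1 : J ≤ 1) :
    1 ≤ J⁻¹ := by
  rwa [inv_eq, le_div_iff_mul_le hJ, one_mul]

theorem mul_mem_one_of_mem_inv {J : FractionalIdeal R⁰ K} {x y : K} (hx : x ∈ J⁻¹)
    (hy : y ∈ J) : x * y ∈ (1 : FractionalIdeal R⁰ K) :=
  mul_comm y x ▸ mul_one_div_le_one (mul_mem_mul hy hx)

end FractionalIdeal

namespace IsCompletelyIntegrallyClosed

open IsLocalization FractionalIdeal

variable {D K : Type*} [CommRing D] [IsDomain D] [Field K] [Algebra D K] [IsFractionRing D K]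

theorem isInteger_of_isInteger_mul_pow (hD : IsCompletelyIntegrallyClosed D K) {x u : K}
    (hx : x ≠ 0) (h : ∀ n : ℕ, 1 ≤ n → IsInteger D (x * u ^ n)) : IsInteger D u := by
  obtain ⟨b, r, hr⟩ := exists_integer_multiple D⁰ x
  refine hD u ⟨r, fun hr0 => ?_, fun n hn => ?_⟩
  · rw [hr0, map_zero, eq_comm, smul_eq_zero] at hr
    exact hr.elim (nonZeroDivisors.coe_ne_zero b) hx
  · obtain ⟨d, hd⟩ := h n hn
    refine ⟨b * d, ?_⟩
    rw [map_mul, hd, hr, Algebra.smul_def, mul_assoc]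

theorem inv_le_one_of_mem_inv_inv_pow (hD : IsCompletelyIntegrallyClosed D K) {I : Ideal D}
    (hI : I ≠ ⊥) {x : K} (hx0 : x ≠ 0)
    (hx : ∀ n : ℕ, 1 ≤ n → x ∈ (((I : FractionalIdeal D⁰ K) ^ n)⁻¹)⁻¹) :
    (I : FractionalIdeal D⁰ K)⁻¹ ≤ 1 := by
  intro u hu
  refine (mem_one_iff D⁰).mpr (hD.isInteger_of_isInteger_mul_pow hx0 fun n hn => ?_)
  have hIn : (I : FractionalIdeal D⁰ K) ^ n ≠ 0 := by
    rw [← coeIdeal_pow]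
    exact coeIdeal_ne_zero.mpr (pow_ne_zero n hI)
  have hun : u ^ n ∈ ((I : FractionalIdeal D⁰ K) ^ n)⁻¹ := by
    rw [← spanSingleton_le_iff_mem, ← spanSingleton_pow]
    exact (pow_le_pow_left' (spanSingleton_le_iff_mem.mpr hu) n).trans (inv_pow_le hIn)
  exact (mem_one_iff D⁰).mp (mul_mem_one_of_mem_inv (hx n hn) hun)

end IsCompletelyIntegrallyClosed

open FractionalIdeal in
/-- If `D` is completely integrally closed, then for every ideal `I` of `D` with
`I_v` a proper ideal of `D`, `⋂_{n ≥ 1} (I^n)_v = (0)`. -/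
theorem stmt_4 (D : Type*) [CommRing D] [IsDomain D]
    (K : Type*) [Field K] [Algebra D K] [IsFractionRing D K]
    (hD : IsCompletelyIntegrallyClosed D K)
    (I : Ideal D)
    (hIv : ((I : FractionalIdeal D⁰ K)⁻¹)⁻¹ ≠ 1) :
    (⨅ (n : ℕ) (_ : 1 ≤ n),
      (((((I : FractionalIdeal D⁰ K) ^ n)⁻¹)⁻¹ : FractionalIdeal D⁰ K) : Submodule D K)) = ⊥ := by
  by_contra hne
  obtain ⟨x, hx, hx0⟩ := Submodule.exists_mem_ne_zero_of_ne_bot hne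
  have hxv : ∀ n : ℕ, 1 ≤ n → x ∈ (((I : FractionalIdeal D⁰ K) ^ n)⁻¹)⁻¹ := by
    simpa only [Submodule.mem_iInf, mem_coe] using hx
  have hI : I ≠ ⊥ := by
    rintro rfl
    simpa [inv_zero', hx0] using hxv 1 le_rfl
  have hinv : (I : FractionalIdeal D⁰ K)⁻¹ = 1 :=
    le_antisymm (hD.inv_le_one_of_mem_inv_inv_pow hI hx0 hxv)
      (one_le_inv_of_le_one (coeIdeal_ne_zero.mpr hI) coeIdeal_le_one)
  exact hIv (by rw [hinv, inv_one])
end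

section
/- Let D be an integral domain, and let S be the set of integral t-invertible ideals I of D such that ⋂_{n≥1}(I^n)_v ≠ (0). Then S is closed under multiplication of ideals. -/
/-!
The whole argument rests on the inclusion `A_v B_v ⊆ (AB)_v`. If `I` and `J` are
`t`-invertible, then `1 ∈ F_v` and `1 ∈ G_v` for finitely generated `F ⊆ II⁻¹` and
`G ⊆ JJ⁻¹`; since `I⁻¹J⁻¹ ⊆ (IJ)⁻¹`, the finitely generated ideal `FG ⊆ (IJ)(IJ)⁻¹` has
`1 ∈ (FG)_v`, whence `IJ` is `t`-invertible. Likewise, nonzero elements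
`x ∈ ⋂ (Iⁿ)_v` and `y ∈ ⋂ (Jⁿ)_v` give the nonzero element `xy ∈ ⋂ ((IJ)ⁿ)_v`.
-/

open scoped nonZeroDivisors

variable (D : Type*) [CommRing D] [IsDomain D]
variable (K : Type*) [Field K] [Algebra D K] [IsFractionRing D K]

/-- The `v`-operation: `I_v = (I⁻¹)⁻¹`, viewed as a `D`-submodule of `K`. -/
noncomputable def vSub (I : FractionalIdeal D⁰ K) : Submodule D K :=
  (((I⁻¹)⁻¹ : FractionalIdeal D⁰ K) : Submodule D K)

/-- The `t`-operation: `I_t = ⋃ {J_v : J ⊆ I nonzero finitely generated}`. -/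
noncomputable def tSub (I : FractionalIdeal D⁰ K) : Submodule D K :=
  ⨆ J : {J : FractionalIdeal D⁰ K // J ≠ 0 ∧ (J : Submodule D K).FG ∧ J ≤ I}, vSub D K J.1

/-- A fractional ideal `I` is `t`-invertible if `(I * I⁻¹)_t = D`. -/
noncomputable def IsTInvertible (I : FractionalIdeal D⁰ K) : Prop :=
  tSub D K (I * I⁻¹) = ((1 : FractionalIdeal D⁰ K) : Submodule D K)

open FractionalIdeal

section

variable {D K}

namespace FractionalIdeal

instance : NoZeroDivisors (FractionalIdeal D⁰ K) where
  eq_zero_or_eq_zero_of_mul_eq_zero {A B} h := by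
    by_contra! hAB
    obtain ⟨a, ha, ha0⟩ : ∃ a ∈ A, a ≠ 0 := by simpa using mt eq_zero_iff.mpr hAB.1
    obtain ⟨b, hb, hb0⟩ : ∃ b ∈ B, b ≠ 0 := by simpa using mt eq_zero_iff.mpr hAB.2
    exact mul_ne_zero ha0 hb0 ((mem_zero_iff _).mp (h ▸ mul_mem_mul ha hb))

theorem inv_ne_zero_of_ne_zero {A : FractionalIdeal D⁰ K} (hA : A ≠ 0) : A⁻¹ ≠ 0 := by
  intro h
  have := bot_lt_mul_inv hA
  rw [h, mul_zero] at this
  exact lt_irrefl _ this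

theorem mul_inv_le_one (A : FractionalIdeal D⁰ K) : A * A⁻¹ ≤ 1 :=
  mul_one_div_le_one

theorem inv_mul_inv_le (A B : FractionalIdeal D⁰ K) : A⁻¹ * B⁻¹ ≤ (A * B)⁻¹ := by
  rcases eq_or_ne A 0 with rfl | hA
  · simp [inv_zero']
  rcases eq_or_ne B 0 with rfl | hB
  · simp [inv_zero']
  rw [inv_eq (I := A * B), le_div_iff_mul_le (mul_ne_zero hA hB)]
  calc A⁻¹ * B⁻¹ * (A * B) = (A * A⁻¹) * (B * B⁻¹) := by ring
    _ ≤ 1 * 1 := mul_le_mul' (mul_inv_le_one A) (mul_inv_le_one B)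
    _ = 1 := one_mul 1

end FractionalIdeal

theorem vSub_zero : vSub D K 0 = ⊥ := by
  simp [vSub, inv_zero']

theorem mul_mem_vSub_mul {A B : FractionalIdeal D⁰ K} {x y : K}
    (hx : x ∈ vSub D K A) (hy : y ∈ vSub D K B) : x * y ∈ vSub D K (A * B) := by
  rcases eq_or_ne A 0 with rfl | hA
  · rw [vSub_zero, Submodule.mem_bot] at hx
    simp [hx, vSub_zero]
  rcases eq_or_ne B 0 with rfl | hB
  · rw [vSub_zero, Submodule.mem_bot] at hy
    simp [hy, vSub_zero]
  have hAB := mul_ne_zero hA hB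
  rw [vSub, mem_coe, mem_inv_iff (inv_ne_zero_of_ne_zero hA)] at hx
  rw [vSub, mem_coe, mem_inv_iff (inv_ne_zero_of_ne_zero hB)] at hy
  rw [vSub, mem_coe, mem_inv_iff (inv_ne_zero_of_ne_zero hAB)]
  intro z hz
  have hza : ∀ a ∈ A, z * a ∈ B⁻¹ := fun a ha => (mem_inv_iff hB).mpr fun b hb => by
    simpa only [mul_assoc] using (mem_inv_iff hAB).mp hz (a * b) (mul_mem_mul ha hb)
  have hyz : y * z ∈ A⁻¹ := (mem_inv_iff hA).mpr fun a ha => by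
    simpa only [mul_assoc] using hy (z * a) (hza a ha)
  simpa only [mul_assoc] using hx (y * z) hyz

theorem vSub_mono {A B : FractionalIdeal D⁰ K} (hAB : A ≤ B) : vSub D K A ≤ vSub D K B := by
  rcases eq_or_ne A 0 with rfl | hA
  · simp [vSub_zero]
  have hB : B ≠ 0 := ne_bot_of_le_ne_bot hA hAB
  exact coe_le_coe.mpr <| inv_anti_mono (inv_ne_zero_of_ne_zero hB) (inv_ne_zero_of_ne_zero hA)
    (inv_anti_mono hA hB hAB)

theorem vSub_le_one {A : FractionalIdeal D⁰ K} (hA : A ≤ 1) :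
    vSub D K A ≤ ((1 : FractionalIdeal D⁰ K) : Submodule D K) := by
  rcases eq_or_ne A 0 with rfl | hA0
  · simp [vSub_zero]
  have h1 : 1 ≤ A⁻¹ := by rwa [inv_eq, le_div_iff_mul_le hA0, one_mul]
  have h1ne := one_ne_zero' (FractionalIdeal D⁰ K)
  have := inv_anti_mono h1ne (ne_bot_of_le_ne_bot h1ne h1) h1
  rwa [inv_one, ← coe_le_coe] at this

theorem tSub_le_one {A : FractionalIdeal D⁰ K} (hA : A ≤ 1) :
    tSub D K A ≤ ((1 : FractionalIdeal D⁰ K) : Submodule D K) :=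
  iSup_le fun F => vSub_le_one (F.2.2.2.trans hA)

theorem vSub_le_tSub {A F : FractionalIdeal D⁰ K} (hF0 : F ≠ 0) (hFfg : (F : Submodule D K).FG)
    (hFA : F ≤ A) : vSub D K F ≤ tSub D K A :=
  le_iSup (fun F : {F : FractionalIdeal D⁰ K // F ≠ 0 ∧ (F : Submodule D K).FG ∧ F ≤ A} =>
    vSub D K F.1) ⟨F, hF0, hFfg, hFA⟩

theorem exists_fg_of_mem_tSub {A : FractionalIdeal D⁰ K} {x : K} (hx0 : x ≠ 0)
    (hx : x ∈ tSub D K A) :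
    ∃ F : FractionalIdeal D⁰ K, F ≠ 0 ∧ (F : Submodule D K).FG ∧ F ≤ A ∧ x ∈ vSub D K F := by
  cases isEmpty_or_nonempty
      {F : FractionalIdeal D⁰ K // F ≠ 0 ∧ (F : Submodule D K).FG ∧ F ≤ A} with
  | inl _ =>
    rw [tSub, iSup_of_empty, Submodule.mem_bot] at hx
    exact absurd hx hx0
  | inr _ =>
    have hdir : Directed (· ≤ ·) fun F : {F : FractionalIdeal D⁰ K //
        F ≠ 0 ∧ (F : Submodule D K).FG ∧ F ≤ A} => vSub D K F.1 := by
      rintro ⟨F, hF0, hFfg, hFA⟩ ⟨G, -, hGfg, hGA⟩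
      refine ⟨⟨F ⊔ G, ne_bot_of_le_ne_bot hF0 le_sup_left, ?_, sup_le hFA hGA⟩,
        vSub_mono le_sup_left, vSub_mono le_sup_right⟩
      rw [coe_sup]
      exact hFfg.sup hGfg
    obtain ⟨⟨F, hF⟩, hxF⟩ := (Submodule.mem_iSup_of_directed _ hdir).mp hx
    exact ⟨F, hF.1, hF.2.1, hF.2.2, hxF⟩

theorem isTInvertible_iff_one_mem_tSub {A : FractionalIdeal D⁰ K} :
    IsTInvertible D K A ↔ (1 : K) ∈ tSub D K (A * A⁻¹) := by
  rw [IsTInvertible, le_antisymm_iff, and_iff_right (tSub_le_one (mul_inv_le_one A)), coe_one,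
    Submodule.one_le]

theorem IsTInvertible.mul {A B : FractionalIdeal D⁰ K} (hA : IsTInvertible D K A)
    (hB : IsTInvertible D K B) : IsTInvertible D K (A * B) := by
  rw [isTInvertible_iff_one_mem_tSub] at *
  obtain ⟨F, hF0, hFfg, hFA, hF1⟩ := exists_fg_of_mem_tSub one_ne_zero hA
  obtain ⟨G, hG0, hGfg, hGB, hG1⟩ := exists_fg_of_mem_tSub one_ne_zero hB
  have hFG : F * G ≤ A * B * (A * B)⁻¹ :=
    calc F * G ≤ A * A⁻¹ * (B * B⁻¹) := mul_le_mul' hFA hGB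
      _ = A * B * (A⁻¹ * B⁻¹) := by ring
      _ ≤ A * B * (A * B)⁻¹ := mul_le_mul_right (inv_mul_inv_le A B) _
  have hFGfg : ((F * G : FractionalIdeal D⁰ K) : Submodule D K).FG := by
    rw [coe_mul]
    exact hFfg.mul hGfg
  exact vSub_le_tSub (mul_ne_zero hF0 hG0) hFGfg hFG (one_mul (1 : K) ▸ mul_mem_vSub_mul hF1 hG1)

theorem mul_mem_iInf_vSub_pow {A B : FractionalIdeal D⁰ K} {x y : K}
    (hx : x ∈ ⨅ (n : ℕ) (_ : 1 ≤ n), vSub D K (A ^ n))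
    (hy : y ∈ ⨅ (n : ℕ) (_ : 1 ≤ n), vSub D K (B ^ n)) :
    x * y ∈ ⨅ (n : ℕ) (_ : 1 ≤ n), vSub D K ((A * B) ^ n) := by
  simp only [Submodule.mem_iInf] at *
  intro n hn
  rw [mul_pow]
  exact mul_mem_vSub_mul (hx n hn) (hy n hn)

theorem iInf_vSub_pow_mul_ne_bot {A B : FractionalIdeal D⁰ K}
    (hA : (⨅ (n : ℕ) (_ : 1 ≤ n), vSub D K (A ^ n)) ≠ ⊥)
    (hB : (⨅ (n : ℕ) (_ : 1 ≤ n), vSub D K (B ^ n)) ≠ ⊥) :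
    (⨅ (n : ℕ) (_ : 1 ≤ n), vSub D K ((A * B) ^ n)) ≠ ⊥ := by
  obtain ⟨x, hx, hx0⟩ := Submodule.exists_mem_ne_zero_of_ne_bot hA
  obtain ⟨y, hy, hy0⟩ := Submodule.exists_mem_ne_zero_of_ne_bot hB
  exact Submodule.ne_bot_iff _ |>.mpr ⟨x * y, mul_mem_iInf_vSub_pow hx hy, mul_ne_zero hx0 hy0⟩

end

/-- the set of integral `t`-invertible ideals `I` with
`⋂_{n ≥ 1} (I^n)_v ≠ (0)` is closed under multiplication of ideals. -/
theorem stmt_6 (I J : Ideal D)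
    (hI : IsTInvertible D K (I : FractionalIdeal D⁰ K))
    (hJ : IsTInvertible D K (J : FractionalIdeal D⁰ K))
    (hIv : (⨅ (n : ℕ) (_ : 1 ≤ n), vSub D K ((I : FractionalIdeal D⁰ K) ^ n)) ≠ ⊥)
    (hJv : (⨅ (n : ℕ) (_ : 1 ≤ n), vSub D K ((J : FractionalIdeal D⁰ K) ^ n)) ≠ ⊥) :
    IsTInvertible D K ((I * J : Ideal D) : FractionalIdeal D⁰ K) ∧
      (⨅ (n : ℕ) (_ : 1 ≤ n), vSub D K (((I * J : Ideal D) : FractionalIdeal D⁰ K) ^ n)) ≠ ⊥ := by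
  rw [coeIdeal_mul]
  exact ⟨hI.mul hJ, iInf_vSub_pow_mul_ne_bot hIv hJv⟩
end

section
/- Let I and J be ideals of an integral domain D such that I^k ⊆ (x) for some x ∈ D and integer k ≥ 1. Then ⋂_{n≥1} I^n ⊆ ⋂_{n≥1}(I^n)_v ⊆ ⋂_{n≥1}(x^n). -/
open scoped nonZeroDivisors

private lemma aux_inv_ne_zero {D : Type*} [CommRing D] [IsDomain D]
    {K : Type*} [Field K] [Algebra D K] [IsFractionRing D K]
    {J : FractionalIdeal D⁰ K} (hJ : J ≠ 0) : J⁻¹ ≠ 0 := by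
  obtain ⟨a, ha, h⟩ := J.isFractional
  have hmem : algebraMap D K a ∈ J⁻¹ := by
    rw [FractionalIdeal.mem_inv_iff hJ]
    intro y hy
    obtain ⟨b, hb⟩ := h y hy
    rw [FractionalIdeal.mem_one_iff]
    exact ⟨b, by rw [hb]; simp [Algebra.smul_def]⟩
  intro h0
  rw [h0] at hmem
  have : algebraMap D K a = 0 := by simpa using hmem
  exact nonZeroDivisors.ne_zero ha
    ((IsFractionRing.injective D K) (by simpa using this))

private lemma aux_le_inv_inv {D : Type*} [CommRing D] [IsDomain D]
    {K : Type*} [Field K] [Algebra D K] [IsFractionRing D K]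
    (J : FractionalIdeal D⁰ K) : J ≤ J⁻¹⁻¹ := by
  rcases eq_or_ne J 0 with h | h
  · simp [h, FractionalIdeal.inv_zero']
  · rw [FractionalIdeal.inv_eq (I := J⁻¹),
      FractionalIdeal.le_div_iff_mul_le (aux_inv_ne_zero h)]
    rw [FractionalIdeal.inv_eq]
    exact FractionalIdeal.mul_one_div_le_one

/-- Let `I` and `J` be ideals of an integral domain `D` with `I^k ⊆ (x)` for some
`x ∈ D` and integer `k ≥ 1`. Then
`⋂_{n ≥ 1} I^n ⊆ ⋂_{n ≥ 1} (I^n)_v ⊆ ⋂_{n ≥ 1} (x^n)` (inside the quotient field `K`). -/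
theorem stmt_9 (D : Type*) [CommRing D] [IsDomain D]
    (K : Type*) [Field K] [Algebra D K] [IsFractionRing D K]
    (I J : Ideal D) (x : D) (k : ℕ) (hk : 1 ≤ k)
    (hIk : I ^ k ≤ Ideal.span {x}) :
    (⨅ (n : ℕ) (_ : 1 ≤ n), (((I ^ n : Ideal D) : FractionalIdeal D⁰ K) : Submodule D K)) ≤
        (⨅ (n : ℕ) (_ : 1 ≤ n),
          (((((I ^ n : Ideal D) : FractionalIdeal D⁰ K)⁻¹)⁻¹ : FractionalIdeal D⁰ K) :
            Submodule D K)) ∧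
      (⨅ (n : ℕ) (_ : 1 ≤ n),
          (((((I ^ n : Ideal D) : FractionalIdeal D⁰ K)⁻¹)⁻¹ : FractionalIdeal D⁰ K) :
            Submodule D K)) ≤
        (⨅ (n : ℕ) (_ : 1 ≤ n),
          (((Ideal.span {x ^ n} : Ideal D) : FractionalIdeal D⁰ K) : Submodule D K)) := by
  constructor
  · refine le_iInf fun n => le_iInf fun hn => ?_
    refine (iInf₂_le n hn).trans ?_
    exact FractionalIdeal.coe_le_coe.mpr (aux_le_inv_inv _)
  · refine le_iInf fun n => le_iInf fun hn => ?_
    have hnk : 1 ≤ n * k := Nat.one_le_iff_ne_zero.mpr (by positivity)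
    refine (iInf₂_le (n * k) hnk).trans ?_
    refine FractionalIdeal.coe_le_coe.mpr ?_
    rcases eq_or_ne I ⊥ with hI | hI
    · have : I ^ (n * k) = ⊥ := by
        rw [hI, Ideal.zero_eq_bot.symm, zero_pow (by omega)]
      rw [this]
      simp only [FractionalIdeal.coeIdeal_bot, FractionalIdeal.inv_zero']
      exact FractionalIdeal.zero_le _
    · -- I ≠ 0, hence x ≠ 0
      have hx : x ≠ 0 := by
        intro hx0
        apply hI
        have hb : I ^ k = ⊥ := le_bot_iff.mp (by simpa [hx0, Set.singleton_zero, Ideal.span_zero] using hIk)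
        exact (pow_eq_zero_iff (Nat.one_le_iff_ne_zero.mp hk)).mp (by simpa using hb)
      have hle : I ^ (n * k) ≤ Ideal.span {x ^ n} := by
        rw [mul_comm, pow_mul, ← Ideal.span_singleton_pow]
        exact Ideal.pow_right_mono hIk n
      have hInk : ((I ^ (n * k) : Ideal D) : FractionalIdeal D⁰ K) ≠ 0 := by
        rw [FractionalIdeal.coeIdeal_ne_zero]
        exact pow_ne_zero _ hI
      have hxn : ((Ideal.span {x ^ n} : Ideal D) : FractionalIdeal D⁰ K) ≠ 0 := by
        rw [FractionalIdeal.coeIdeal_ne_zero]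
        simp [Ideal.span_singleton_eq_bot, pow_ne_zero _ hx]
      have hle' : ((I ^ (n * k) : Ideal D) : FractionalIdeal D⁰ K) ≤
          ((Ideal.span {x ^ n} : Ideal D) : FractionalIdeal D⁰ K) :=
        (FractionalIdeal.coeIdeal_le_coeIdeal K).mpr hle
      have h1 := FractionalIdeal.inv_anti_mono (K := K) hInk hxn hle'
      have h2 := FractionalIdeal.inv_anti_mono (K := K) (aux_inv_ne_zero hxn)
        (aux_inv_ne_zero hInk) h1
      refine h2.trans ?_
      rw [FractionalIdeal.coeIdeal_span_singleton, FractionalIdeal.spanSingleton_inv,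
        FractionalIdeal.spanSingleton_inv, inv_inv]
end

section
/- Let D be an integral domain that is not a field such that every maximal ideal M of D is principal and ⋂_{n≥1} M^n = (0). Then D is a principal ideal domain. -/
/-- Let `D` be an integral domain that is not a field such that every maximal ideal `M`
of `D` is principal and `⋂_{n ≥ 1} M^n = (0)`. Then `D` is a principal ideal domain. -/
theorem stmt_10 (D : Type*) [CommRing D] [IsDomain D] (hnf : ¬ IsField D)
    (h : ∀ M : Ideal D, M.IsMaximal →
      (∃ x : D, M = Ideal.span {x}) ∧ (⨅ (n : ℕ) (_ : 1 ≤ n), M ^ n) = ⊥) :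
    IsPrincipalIdealRing D := by
  apply IsPrincipalIdealRing.of_prime
  intro P hP
  by_cases hP0 : P = ⊥
  · exact ⟨0, by rw [hP0, Set.singleton_zero, Submodule.span_zero]⟩
  obtain ⟨M, hM, hPM⟩ := P.exists_le_maximal hP.ne_top
  obtain ⟨⟨x, hMx⟩, hinf⟩ := h M hM
  by_cases hxP : x ∈ P
  · have : P = M := le_antisymm hPM (by
      rw [hMx, Ideal.span_le, Set.singleton_subset_iff]; exact hxP)
    exact this ▸ ⟨x, hMx⟩
  · exfalso
    obtain ⟨a, haP, ha0⟩ := Submodule.exists_mem_ne_zero_of_ne_bot hP0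
    have key : ∀ n : ℕ, a ∈ M ^ n := by
      intro n
      induction n with
      | zero => simp
      | succ n ih =>
        rw [hMx, Ideal.span_singleton_pow, Ideal.mem_span_singleton] at ih ⊢
        obtain ⟨c, hc⟩ := ih
        have hcP : c ∈ P := by
          rcases hP.mem_or_mem (hc ▸ haP) with hx | hc'
          · exact absurd (hP.mem_of_pow_mem n hx) hxP
          · exact hc'
        have : x ∣ c := by
          rw [← Ideal.mem_span_singleton, ← hMx]; exact hPM hcP
        obtain ⟨d, hd⟩ := this
        exact ⟨d, by rw [hc, hd, pow_succ]; ring⟩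
    have : a ∈ (⨅ (n : ℕ) (_ : 1 ≤ n), M ^ n) := by
      simp only [Ideal.mem_iInf]
      exact fun n _ => key n
    rw [hinf] at this
    exact ha0 this
end

section
/- Let D be an integral domain that is not a field such that every maximal ideal M of D is invertible and ⋂_{n≥1} M^n = (0). Then D is a Dedekind domain. -/
open scoped nonZeroDivisors

/-!
If `M` is an invertible maximal ideal, every ideal `I ≤ M` factors as `I = J * M` with
`J = I M⁻¹ ⊇ I`, and `J ≠ I` unless `I ⊆ I M`, i.e. `I ⊆ ⋂ Mⁿ = 0`. For a nonzero prime `P ≤ M`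
this forces `P = M`, since `J ⊄ P`. So nonzero primes are invertible, hence finitely generated,
and `D` is Noetherian by Cohen's theorem. Noetherian induction along `I < J` then makes every
nonzero ideal invertible.
-/

namespace Ideal

theorem le_pow_of_le_mul {R : Type*} [CommSemiring R] {I M : Ideal R} (h : I ≤ I * M) (n : ℕ) :
    I ≤ M ^ n := by
  have hI : I ≤ I * M ^ n := by
    induction n with
    | zero => simp
    | succ n ih =>
      calc I ≤ I * M := h
        _ ≤ I * M ^ n * M := mul_mono_left ih
        _ = I * M ^ (n + 1) := by rw [mul_assoc, pow_succ]
  exact hI.trans mul_le_right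

theorem eq_bot_of_le_mul {R : Type*} [CommSemiring R] {I M : Ideal R}
    (hM : ⨅ (n : ℕ) (_ : 1 ≤ n), M ^ n = ⊥) (h : I ≤ I * M) : I = ⊥ := by
  rw [← le_bot_iff, ← hM]
  exact le_iInf₂ fun n _ => le_pow_of_le_mul h n

end Ideal

section InvertibleMaximal

variable {D : Type*} [CommRing D] [IsDomain D] {K : Type*} [Field K] [Algebra D K]
  [IsFractionRing D K] {I M : Ideal D}

open FractionalIdeal

theorem Ideal.exists_mul_eq_of_le
    (hM : (M : FractionalIdeal D⁰ K) * (M : FractionalIdeal D⁰ K)⁻¹ = 1) (hIM : I ≤ M) :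
    ∃ J : Ideal D, J * M = I := by
  have hle : (I : FractionalIdeal D⁰ K) * (M : FractionalIdeal D⁰ K)⁻¹ ≤ 1 :=
    hM ▸ mul_left_mono ((coeIdeal_le_coeIdeal K).mpr hIM)
  obtain ⟨J, hJ⟩ := le_one_iff_exists_coeIdeal.mp hle
  refine ⟨J, coeIdeal_injective (K := K)
    (show ((J * M : Ideal D) : FractionalIdeal D⁰ K) = I from ?_)⟩
  rw [coeIdeal_mul, hJ, mul_assoc, mul_comm _ (M : FractionalIdeal D⁰ K), hM, mul_one]

theorem Ideal.exists_lt_mul_eq_of_le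
    (hM : (M : FractionalIdeal D⁰ K) * (M : FractionalIdeal D⁰ K)⁻¹ = 1)
    (hM' : ⨅ (n : ℕ) (_ : 1 ≤ n), M ^ n = ⊥) (hI : I ≠ ⊥) (hIM : I ≤ M) :
    ∃ J : Ideal D, I < J ∧ J * M = I := by
  obtain ⟨J, hJM⟩ := exists_mul_eq_of_le hM hIM
  refine ⟨J, lt_of_le_of_ne (hJM ▸ mul_le_left) fun hIJ => hI ?_, hJM⟩
  rw [← hIJ] at hJM
  exact eq_bot_of_le_mul hM' hJM.ge

theorem Ideal.IsPrime.eq_of_le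
    (hM : (M : FractionalIdeal D⁰ K) * (M : FractionalIdeal D⁰ K)⁻¹ = 1)
    (hM' : ⨅ (n : ℕ) (_ : 1 ≤ n), M ^ n = ⊥) {P : Ideal D} (hP : P.IsPrime) (hP0 : P ≠ ⊥)
    (hPM : P ≤ M) : P = M := by
  obtain ⟨J, hPJ, hJM⟩ := exists_lt_mul_eq_of_le hM hM' hP0 hPM
  rcases hP.mul_le.mp hJM.le with hJP | hMP
  · exact absurd hJP hPJ.not_ge
  · exact le_antisymm hPM hMP

variable (K) in
theorem isDedekindDomain_of_forall_isUnit_coeIdeal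
    (h : ∀ I : Ideal D, I ≠ ⊥ → IsUnit (I : FractionalIdeal D⁰ K)) : IsDedekindDomain D := by
  refine (isDedekindDomain_iff_mul_inv_cancel (K := K)).mpr fun I hI => ?_
  rw [mul_inv_cancel_iff_isUnit]
  obtain ⟨a, J, ha, rfl⟩ := exists_eq_spanSingleton_mul I
  have hJ : J ≠ ⊥ := by
    rintro rfl
    simp at hI
  have hx : (algebraMap D K a)⁻¹ ≠ 0 :=
    inv_ne_zero ((map_ne_zero_iff _ (IsFractionRing.injective D K)).mpr ha)
  exact ((mul_inv_cancel_iff_isUnit K).mp (spanSingleton_mul_inv K hx)).mul (h J hJ)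

variable (K) in
theorem isNoetherianRing_of_forall_isMaximal
    (h : ∀ M : Ideal D, M.IsMaximal →
      (M : FractionalIdeal D⁰ K) * (M : FractionalIdeal D⁰ K)⁻¹ = 1 ∧
        ⨅ (n : ℕ) (_ : 1 ≤ n), M ^ n = ⊥) :
    IsNoetherianRing D := by
  refine IsNoetherianRing.of_prime_ne_bot fun P hP hP0 => ?_
  obtain ⟨M, hM, hPM⟩ := P.exists_le_maximal hP.ne_top
  obtain ⟨hMinv, hMsep⟩ := h M hM
  rw [hP.eq_of_le hMinv hMsep hP0 hPM]
  exact M.fg_of_isUnit (IsFractionRing.injective D K) ((mul_inv_cancel_iff_isUnit K).mp hMinv)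

theorem isUnit_coeIdeal_of_forall_isMaximal [IsNoetherianRing D]
    (h : ∀ M : Ideal D, M.IsMaximal →
      (M : FractionalIdeal D⁰ K) * (M : FractionalIdeal D⁰ K)⁻¹ = 1 ∧
        ⨅ (n : ℕ) (_ : 1 ≤ n), M ^ n = ⊥)
    (I : Ideal D) (hI : I ≠ ⊥) : IsUnit (I : FractionalIdeal D⁰ K) := by
  induction I using IsNoetherian.induction with
  | hgt I ih =>
    obtain rfl | hItop := eq_or_ne I ⊤
    · simp
    obtain ⟨M, hM, hIM⟩ := Ideal.exists_le_maximal I hItop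
    obtain ⟨hMinv, hMsep⟩ := h M hM
    obtain ⟨J, hIJ, rfl⟩ := Ideal.exists_lt_mul_eq_of_le hMinv hMsep hI hIM
    rw [coeIdeal_mul]
    exact (ih J hIJ (ne_bot_of_gt hIJ)).mul ((mul_inv_cancel_iff_isUnit K).mp hMinv)

end InvertibleMaximal

theorem stmt_11_general (D : Type*) [CommRing D] [IsDomain D]
    (h : ∀ M : Ideal D, M.IsMaximal →
      ((M : FractionalIdeal D⁰ (FractionRing D)) *
          (M : FractionalIdeal D⁰ (FractionRing D))⁻¹ = 1) ∧
        (⨅ (n : ℕ) (_ : 1 ≤ n), M ^ n) = ⊥) :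
    IsDedekindDomain D := by
  have := isNoetherianRing_of_forall_isMaximal (FractionRing D) h
  exact isDedekindDomain_of_forall_isUnit_coeIdeal (FractionRing D)
    (isUnit_coeIdeal_of_forall_isMaximal h)

/-- Let `D` be an integral domain that is not a field such that every maximal ideal `M`
of `D` is invertible (`M M⁻¹ = D`) and `⋂_{n ≥ 1} M^n = (0)`. Then `D` is a Dedekind
domain. -/
theorem stmt_11 (D : Type*) [CommRing D] [IsDomain D] (hnf : ¬ IsField D)
    (h : ∀ M : Ideal D, M.IsMaximal →
      ((M : FractionalIdeal D⁰ (FractionRing D)) *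
          (M : FractionalIdeal D⁰ (FractionRing D))⁻¹ = 1) ∧
        (⨅ (n : ℕ) (_ : 1 ≤ n), M ^ n) = ⊥) :
    IsDedekindDomain D :=
  stmt_11_general D h
end

section
/- Let V = K + M be a one-dimensional valuation domain with maximal ideal M satisfying M^2 = M, where K is a field contained in V, and let k be a proper subfield of K. Set D = k + M. Then D is Archimedean, but there exist a, b ∈ D with (b) ⊄ (a) such that ⋂_{n≥1}((a):(b))^n = M ≠ (0). In particular, with m ∈ M nonzero and α ∈ K \ k, taking b = m and a = αm, one has (a):(b) = M. -/
variable (V : Type*) [CommRing V] [IsDomain V]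

/-- The subring `k + M` of `V`, for a subring `k` and an ideal `M` of `V`. -/
def plusSubring (k : Subring V) (M : Ideal V) : Subring V where
  carrier := {v : V | ∃ c ∈ k, ∃ m ∈ M, v = c + m}
  zero_mem' := ⟨0, zero_mem k, 0, M.zero_mem, by ring⟩
  one_mem' := ⟨1, one_mem k, 0, M.zero_mem, by ring⟩
  add_mem' := by
    rintro _ _ ⟨c, hc, m, hm, rfl⟩ ⟨c', hc', m', hm', rfl⟩
    exact ⟨c + c', add_mem hc hc', m + m', M.add_mem hm hm', by ring⟩
  neg_mem' := by
    rintro _ ⟨c, hc, m, hm, rfl⟩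
    exact ⟨-c, neg_mem hc, -m, M.neg_mem hm, by ring⟩
  mul_mem' := by
    rintro _ _ ⟨c, hc, m, hm, rfl⟩ ⟨c', hc', m', hm', rfl⟩
    exact ⟨c * c', mul_mem hc hc',
      c * m' + m * c' + m * m',
      M.add_mem (M.add_mem (M.mul_mem_left _ hm') (M.mul_mem_right _ hm)) (M.mul_mem_left _ hm'),
      by ring⟩

/-- The ideal `M` viewed as an ideal of the subring `k + M`. -/
def resIdeal (k : Subring V) (M : Ideal V) : Ideal (plusSubring V k M) :=
  M.comap (plusSubring V k M).subtype

/-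
`D = k + M` is local with maximal ideal `M`: an element `c + μ` with `c ≠ 0` inverts to
`c⁻¹ - c⁻¹ (c + μ)⁻¹ μ ∈ k + M`. In the one-dimensional valuation domain `V`, for a nonunit
`x ≠ 0` the ideal `⋂ₙ (xⁿ)` is prime (by total divisibility) and misses `x`, so it is `(0)`;
hence `D` is Archimedean. On the other hand, since `K ∩ M = 0`, an element `α d` with
`α ∈ K \ k` and `d ∈ D` lies in `D` only if `d ∈ M`; this gives `(αm):(m) = M`, and `M² = M`
makes every power of this colon ideal equal to `M`.
-/

theorem IsIdempotentElem.iInf_pow_eq {α : Type*} [Monoid α] [CompleteLattice α] {a : α}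
    (h : IsIdempotentElem a) : ⨅ (n : ℕ) (_ : 1 ≤ n), a ^ n = a := by
  refine le_antisymm ((iInf₂_le 1 le_rfl).trans (pow_one a).le) (le_iInf₂ fun n hn => ?_)
  obtain ⟨m, rfl⟩ := Nat.exists_eq_add_of_le' hn
  exact (h.pow_succ_eq m).ge

section iInfSpanPow

variable {W : Type*} [CommRing W]

theorem mem_iInf_span_pow {x y : W} : y ∈ ⨅ n : ℕ, Ideal.span {x ^ n} ↔ ∀ n, x ^ n ∣ y := by
  simp only [Submodule.mem_iInf, Ideal.mem_span_singleton]

variable [IsDomain W]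

theorem notMem_iInf_span_pow {x : W} (hx : ¬IsUnit x) (hx0 : x ≠ 0) :
    x ∉ ⨅ n : ℕ, Ideal.span {x ^ n} := fun h =>
  hx <| isUnit_of_dvd_one <| (mul_dvd_mul_iff_left hx0).mp <| by
    simpa [sq] using mem_iInf_span_pow.mp h 2

theorem isPrime_iInf_span_pow [ValuationRing W] {x : W} (hx : ¬IsUnit x) (hx0 : x ≠ 0) :
    (⨅ n : ℕ, Ideal.span {x ^ n}).IsPrime := by
  refine Ideal.isPrime_iff.mpr ⟨fun h => hx ?_, fun {a b} hab => ?_⟩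
  · have h1 : (1 : W) ∈ ⨅ n : ℕ, Ideal.span {x ^ n} := h ▸ Submodule.mem_top
    exact isUnit_of_dvd_one (by simpa using mem_iInf_span_pow.mp h1 1)
  by_contra! hcon
  simp only [mem_iInf_span_pow, not_forall] at hcon
  obtain ⟨⟨n, hn⟩, ⟨p, hp⟩⟩ := hcon
  have hab_dvd : a * b ∣ x ^ (n + p) := pow_add x n p ▸
    mul_dvd_mul ((ValuationRing.dvd_total _ _).resolve_left hn)
      ((ValuationRing.dvd_total _ _).resolve_left hp)
  have hdvd : x ^ (n + p) * x ∣ x ^ (n + p) * 1 := by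
    simpa [← pow_succ] using (mem_iInf_span_pow.mp hab (n + p + 1)).trans hab_dvd
  exact hx (isUnit_of_dvd_one ((mul_dvd_mul_iff_left (pow_ne_zero _ hx0)).mp hdvd))

theorem iInf_span_pow_eq_bot [ValuationRing W] {x : W} (hx : ¬IsUnit x)
    (hmem : ∀ P : Ideal W, P.IsPrime → P ≠ ⊥ → x ∈ P) : ⨅ n : ℕ, Ideal.span {x ^ n} = ⊥ := by
  by_cases hx0 : x = 0
  · exact eq_bot_iff.mpr ((iInf_le _ 1).trans (by simp [hx0]))
  by_contra hne
  exact notMem_iInf_span_pow hx hx0 (hmem _ (isPrime_iInf_span_pow hx hx0) hne)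

end iInfSpanPow

section PlusSubring

variable {R : Type*} [CommRing R] {k K : Subring R} {M : Ideal R}

theorem mem_plusSubring_of_mem {v : R} (hv : v ∈ M) : v ∈ plusSubring R k M :=
  ⟨0, zero_mem k, v, hv, (zero_add v).symm⟩

theorem mem_resIdeal_iff {x : plusSubring R k M} : x ∈ resIdeal R k M ↔ (x : R) ∈ M :=
  Iff.rfl

theorem isIdempotentElem_resIdeal (h : IsIdempotentElem M) :
    IsIdempotentElem (resIdeal R k M) := by
  refine le_antisymm Ideal.mul_le_left fun z hz => ?_
  have key : ∀ v (hv : v ∈ M * M), (⟨v, mem_plusSubring_of_mem (Ideal.mul_le_left hv)⟩ :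
      plusSubring R k M) ∈ resIdeal R k M * resIdeal R k M := by
    intro v hv
    induction hv using Submodule.mul_induction_on' with
    | mem_mul_mem p hp q hq =>
      exact Ideal.mul_mem_mul (r := (⟨p, mem_plusSubring_of_mem hp⟩ : plusSubring R k M))
        (s := (⟨q, mem_plusSubring_of_mem hq⟩ : plusSubring R k M)) hp hq
    | add u _ w _ hu hw => exact add_mem hu hw
  exact key z (h.symm ▸ hz)

theorem isUnit_of_isUnit_coe (hk : ∀ x ∈ k, x ≠ (0 : R) → ∃ y ∈ k, x * y = 1) (hM : M ≠ ⊤)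
    {x : plusSubring R k M} (hx : IsUnit (x : R)) : IsUnit x := by
  obtain ⟨c, hc, μ, hμ, hxc⟩ := x.2
  obtain ⟨w, hw⟩ := hx.exists_right_inv
  have hc0 : c ≠ 0 := by
    rintro rfl
    exact hM (M.eq_top_of_isUnit_mem (by simpa [hxc] using hμ) hx)
  obtain ⟨c', hc', hcc'⟩ := hk c hc hc0
  have hwD : w ∈ plusSubring R k M :=
    ⟨c', hc', -(c' * w * μ), M.neg_mem (M.mul_mem_left _ hμ), by
      linear_combination (-c' * w) * hxc + c' * hw - w * hcc'⟩
  exact IsUnit.of_mul_eq_one (⟨w, hwD⟩ : plusSubring R k M) (Subtype.ext hw)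

theorem coe_mem_of_not_isUnit [IsLocalRing R] (hk : ∀ x ∈ k, x ≠ (0 : R) → ∃ y ∈ k, x * y = 1)
    (hM : M.IsMaximal) {x : plusSubring R k M} (hx : ¬IsUnit x) : (x : R) ∈ M := by
  by_contra hxM
  refine hx (isUnit_of_isUnit_coe hk hM.ne_top (IsLocalRing.notMem_maximalIdeal.mp ?_))
  rwa [← IsLocalRing.eq_maximalIdeal hM]

theorem eq_zero_of_mem_of_mem_ideal (hK : ∀ x ∈ K, x ≠ (0 : R) → ∃ y ∈ K, x * y = 1) (hM : M ≠ ⊤)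
    {x : R} (hxK : x ∈ K) (hxM : x ∈ M) : x = 0 := by
  by_contra hx
  obtain ⟨y, -, hxy⟩ := hK x hxK hx
  exact hM (M.eq_top_of_isUnit_mem hxM (IsUnit.of_mul_eq_one y hxy))

theorem mem_of_mul_mem_plusSubring (hK : ∀ x ∈ K, x ≠ (0 : R) → ∃ y ∈ K, x * y = 1)
    (hk : ∀ x ∈ k, x ≠ (0 : R) → ∃ y ∈ k, x * y = 1) (hkK : k ≤ K) (hM : M ≠ ⊤)
    {α d : R} (hαK : α ∈ K) (hαk : α ∉ k) (hd : d ∈ plusSubring R k M)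
    (hαd : α * d ∈ plusSubring R k M) : d ∈ M := by
  obtain ⟨c, hc, μ, hμ, rfl⟩ := hd
  obtain ⟨c', hc', μ', hμ', hαc⟩ := hαd
  have hdiff : α * c - c' = μ' - α * μ := by linear_combination hαc
  have hαc' : α * c = c' := sub_eq_zero.mp <| eq_zero_of_mem_of_mem_ideal hK hM
    (sub_mem (mul_mem hαK (hkK hc)) (hkK hc')) (hdiff ▸ M.sub_mem hμ' (M.mul_mem_left α hμ))
  obtain rfl : c = 0 := by
    by_contra hc0
    obtain ⟨e, he, hce⟩ := hk c hc hc0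
    exact hαk (by simpa [← hαc', mul_assoc, hce] using mul_mem hc' he)
  simpa using hμ

theorem colon_span_eq_resIdeal [IsDomain R] (hK : ∀ x ∈ K, x ≠ (0 : R) → ∃ y ∈ K, x * y = 1)
    (hk : ∀ x ∈ k, x ≠ (0 : R) → ∃ y ∈ k, x * y = 1) (hkK : k ≤ K) (hM : M ≠ ⊤)
    {α m : R} (hαK : α ∈ K) (hαk : α ∉ k) (hm0 : m ≠ 0) {a b : plusSubring R k M}
    (ha : (a : R) = α * m) (hb : (b : R) = m) :
    (Ideal.span {a}).colon (Ideal.span {b}) = resIdeal R k M := by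
  ext x
  rw [Ideal.mem_colon_span_singleton, Ideal.mem_span_singleton', mem_resIdeal_iff]
  constructor
  · rintro ⟨d, hd⟩
    have hxd : (x : R) = α * d := mul_right_cancel₀ hm0 <| by
      have hdV := congrArg Subtype.val hd
      push_cast [ha, hb] at hdV
      linear_combination -hdV
    have hdM := mem_of_mul_mem_plusSubring hK hk hkK hM hαK hαk d.2 (hxd ▸ x.2)
    exact hxd ▸ M.mul_mem_left α hdM
  · intro hxM
    obtain ⟨β, -, hαβ⟩ := hK α hαK fun h => hαk (h ▸ zero_mem k)
    refine ⟨⟨β * x, mem_plusSubring_of_mem (M.mul_mem_left β hxM)⟩, Subtype.ext ?_⟩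
    push_cast [ha, hb]
    linear_combination (x * m : R) * hαβ

theorem iInf_span_pow_eq_bot_of_not_isUnit [IsDomain R] [ValuationRing R]
    (hk : ∀ x ∈ k, x ≠ (0 : R) → ∃ y ∈ k, x * y = 1) (hM : M.IsMaximal)
    (hdim : ∀ P : Ideal R, P.IsPrime → P ≠ ⊥ → P = M) {x : plusSubring R k M}
    (hx : ¬IsUnit x) : ⨅ (n : ℕ) (_ : 1 ≤ n), Ideal.span {x ^ n} = ⊥ := by
  have hxM : (x : R) ∈ M := coe_mem_of_not_isUnit hk hM hx
  have hbot : ⨅ n : ℕ, Ideal.span {(x : R) ^ n} = ⊥ :=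
    iInf_span_pow_eq_bot (fun h => hM.ne_top (M.eq_top_of_isUnit_mem hxM h))
      fun P hP hP0 => hdim P hP hP0 ▸ hxM
  refine eq_bot_iff.mpr fun y hy => (Submodule.mem_bot _).mpr (Subtype.ext ?_)
  have hyV : (y : R) ∈ ⨅ n : ℕ, Ideal.span {(x : R) ^ n} := by
    refine mem_iInf_span_pow.mpr fun n => ?_
    rcases Nat.eq_zero_or_pos n with rfl | hn
    · simp
    · simp only [Submodule.mem_iInf] at hy
      have hdvd := Ideal.mem_span_singleton.mp (hy n hn)
      simpa using map_dvd (plusSubring R k M).subtype hdvd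
  simpa [hbot] using hyV

end PlusSubring

theorem stmt_17 [ValuationRing V]
    (M : Ideal V) (hMmax : M.IsMaximal)
    (hMbot : M ≠ ⊥) (hdim : ∀ P : Ideal V, P.IsPrime → P ≠ ⊥ → P = M)
    (hM2 : M * M = M)
    (K k : Subring V)
    (hK : ∀ x ∈ K, x ≠ (0 : V) → ∃ y ∈ K, x * y = 1)
    (hk : ∀ x ∈ k, x ≠ (0 : V) → ∃ y ∈ k, x * y = 1)
    (hkK : k ≤ K) (hkne : k ≠ K) :
    (∀ x : plusSubring V k M, ¬ IsUnit x →
        (⨅ (n : ℕ) (_ : 1 ≤ n), Ideal.span {x ^ n}) = ⊥) ∧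
      (∃ a b : plusSubring V k M, ¬ Ideal.span {b} ≤ Ideal.span {a} ∧
        (⨅ (n : ℕ) (_ : 1 ≤ n), ((Ideal.span {a}).colon (Ideal.span {b})) ^ n) =
          resIdeal V k M ∧
        resIdeal V k M ≠ ⊥) ∧
      (∀ m : V, m ∈ M → m ≠ 0 → ∀ α ∈ K, α ∉ k →
        ∀ a b : plusSubring V k M, (a : V) = α * m → (b : V) = m →
          (Ideal.span {a}).colon (Ideal.span {b}) = resIdeal V k M) := by
  refine ⟨fun x hx => iInf_span_pow_eq_bot_of_not_isUnit hk hMmax hdim hx, ?_,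
    fun _ _ hm0 _ hαK hαk _ _ ha hb =>
      colon_span_eq_resIdeal hK hk hkK hMmax.ne_top hαK hαk hm0 ha hb⟩
  obtain ⟨α, hαK, hαk⟩ := SetLike.exists_of_lt (lt_of_le_of_ne hkK hkne)
  obtain ⟨m, hmM, hm0⟩ := (Submodule.ne_bot_iff M).mp hMbot
  let b : plusSubring V k M := ⟨m, mem_plusSubring_of_mem hmM⟩
  let a : plusSubring V k M := ⟨α * m, mem_plusSubring_of_mem (M.mul_mem_left α hmM)⟩
  have hab : (Ideal.span {a}).colon (Ideal.span {b}) = resIdeal V k M :=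
    colon_span_eq_resIdeal hK hk hkK hMmax.ne_top hαK hαk hm0 rfl rfl
  refine ⟨a, b, fun hle => hMmax.ne_top ?_, hab ▸ (isIdempotentElem_resIdeal hM2).iInf_pow_eq,
    (Submodule.ne_bot_iff _).mpr ⟨b, hmM, fun h => hm0 (congrArg Subtype.val h)⟩⟩
  have htop : resIdeal V k M = ⊤ := hab ▸ (Submodule.colon_eq_top_iff_subset _).mpr hle
  have hone : (1 : plusSubring V k M) ∈ resIdeal V k M := htop ▸ Submodule.mem_top
  exact (Ideal.eq_top_iff_one M).mpr hone
end
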